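/- arXiv:1907.04853 — 4 statements merged into one kernel-verified Lean document; each statement's English description precedes it below -/
import Mathlib

section
/- Let T ≥ 3 be an integer and K = ⌊(T−1)/2⌋. Suppose (𝒟, m, (F_t)_{t=1}^{T}) and (𝒟′, m′, (F′_t)_{t=1}^{T}) are two choice-set structures on 𝒴 with horizon T, and that each satisfies the linear independence condition: for every subset 𝒯* ⊆ {1,…,T} with |𝒯*| = K, the family of functions 𝒴^K → ℝ given by (y_t)_{t∈𝒯*} ↦ ∏_{t∈𝒯*} F_t(y_t|D), indexed by D ∈ 𝒟 (respectively, the primed family indexed by D ∈ 𝒟′), is linearly independent in the real vector space of functions 𝒴^K → ℝ. If the two structures induce the same joint distribution on 𝒴^T, i.e. Σ_{D∈𝒟} m(D) ∏_{t=1}^{T} F_t(y_t|D) = Σ_{D∈𝒟′} m′(D) ∏_{t=1}^{T} F′_t(y_t|D) for every (y_1,…,y_T) ∈ 𝒴^T, then 𝒟′ = 𝒟, m′(D) = m(D) for every D ∈ 𝒟, and F′_t(·|D) = F_t(·|D) for every t ∈ {1,…,T} and every D ∈ 𝒟. -/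
/-!
Summing out periods, the two mixtures agree on every set of periods. Fix a period `τ` and split
the other periods into disjoint sets `A`, `B` of size `K` (possible as `2K < T`). Pairing the
mixtures over `A ∪ B` and over `A ∪ B ∪ {τ}` with the dual vector of the `A`-kernel of
`D₀ ∈ 𝒟` writes `m D₀` times the `B`-kernel of `D₀`, with and without the factor
`F τ D₀ y`, as combinations of the `B`-kernels of `𝒟'` with the same coefficients. Linear
independence of those kernels forces `F' τ D = F τ D₀` whenever the coefficient of `D` is
nonzero, and positivity of `m D₀` provides such a `D`; comparing supports gives `D = D₀`. Once
`𝒟' = 𝒟` and `F' = F`, linear independence of the `A`-kernels identifies the weights.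
-/

open Finset Function

theorem LinearIndepOn.exists_dual_sum_smul_eq {K V ι : Type*} [Field K] [AddCommGroup V]
    [Module K V] {v : ι → V} {s : Finset ι} (hv : LinearIndepOn K v s) {i₀ : ι} (hi₀ : i₀ ∈ s) :
    ∃ φ : Module.Dual K V, ∀ c : ι → K, φ (∑ i ∈ s, c i • v i) = c i₀ := by
  obtain ⟨f, hf₀, hf⟩ := Submodule.exists_dual_map_eq_bot_of_notMem
    (hv.notMem_span (mem_coe.2 hi₀)) inferInstance
  have hvanish : ∀ i ∈ s, i ≠ i₀ → f (v i) = 0 := fun i hi hne =>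
    (Submodule.mem_bot K).1 <|
      hf ▸ Submodule.mem_map_of_mem (Submodule.subset_span ⟨i, ⟨hi, hne⟩, rfl⟩)
  refine ⟨(f (v i₀))⁻¹ • f, fun c => ?_⟩
  rw [LinearMap.smul_apply, map_sum, sum_eq_single_of_mem i₀ hi₀ fun i hi hne => by
    simp [hvanish i hi hne], map_smul, smul_eq_mul, smul_eq_mul]
  field_simp

theorem Finset.exists_disjoint_subsets_card_eq {α : Type*} [DecidableEq α] {s : Finset α}
    {a b : ℕ} (h : a + b ≤ #s) : ∃ A ⊆ s, ∃ B ⊆ s, Disjoint A B ∧ #A = a ∧ #B = b := by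
  obtain ⟨A, hA, rfl⟩ := exists_subset_card_eq (le_of_add_le_left h)
  obtain ⟨B, hB, rfl⟩ := exists_subset_card_eq (s := s \ A) (n := b)
    (by rw [card_sdiff_of_subset hA]; omega)
  exact ⟨A, hA, B, hB.trans sdiff_subset, disjoint_of_subset_right hB disjoint_sdiff, rfl, rfl⟩

section Mixture

variable {ι κ Y : Type*}

def prodKernel (F : ι → κ → Y → ℝ) (S : Finset ι) (D : κ) : (ι → Y) → ℝ :=
  fun ys => ∏ t ∈ S, F t D (ys t)

def mixture (𝒟 : Finset κ) (m : κ → ℝ) (F : ι → κ → Y → ℝ) (S : Finset ι) : (ι → Y) → ℝ :=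
  ∑ D ∈ 𝒟, m D • prodKernel F S D

variable {𝒟 𝒟' : Finset κ} {m m' : κ → ℝ} {F F' : ι → κ → Y → ℝ} {S A B : Finset ι} {D₀ : κ}

theorem mixture_apply (ys : ι → Y) :
    mixture 𝒟 m F S ys = ∑ D ∈ 𝒟, m D * ∏ t ∈ S, F t D (ys t) := by
  simp only [mixture, Finset.sum_apply, Pi.smul_apply, smul_eq_mul, prodKernel]

theorem mixture_congr (h : ∀ t ∈ S, ∀ D ∈ 𝒟, F' t D = F t D) :
    mixture 𝒟 m F' S = mixture 𝒟 m F S :=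
  sum_congr rfl fun D hD => by
    congr 1
    funext ys
    exact prod_congr rfl fun t ht => by rw [h t ht D hD]

theorem linearIndepOn_prodKernel_iff :
    LinearIndepOn ℝ (prodKernel F S) (𝒟 : Set κ) ↔ ∀ α : κ → ℝ,
      (∀ ys : ι → Y, ∑ D ∈ 𝒟, α D * ∏ t ∈ S, F t D (ys t) = 0) → ∀ D ∈ 𝒟, α D = 0 := by
  simp [linearIndepOn_finset_iff, funext_iff, Finset.sum_apply, prodKernel]

variable [DecidableEq ι]

theorem prodKernel_update_of_notMem {τ : ι} (hτ : τ ∉ S) (D : κ) (ys : ι → Y) (y : Y) :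
    prodKernel F S D (update ys τ y) = prodKernel F S D ys :=
  prod_congr rfl fun t ht => by rw [update_of_ne (ne_of_mem_of_not_mem ht hτ)]

theorem prodKernel_insert {τ : ι} (hτ : τ ∉ S) (D : κ) (ys : ι → Y) :
    prodKernel F (insert τ S) D ys = F τ D (ys τ) * prodKernel F S D ys :=
  prod_insert hτ

theorem prodKernel_update_of_mem {τ : ι} (hτ : τ ∈ S) (D : κ) (ys : ι → Y) (y : Y) :
    prodKernel F S D (update ys τ y) = F τ D y * prodKernel F (S.erase τ) D ys := by
  nth_rw 1 [← insert_erase hτ]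
  rw [prodKernel_insert (notMem_erase τ S), update_self,
    prodKernel_update_of_notMem (notMem_erase τ S)]

theorem prodKernel_union_piecewise {A C : Finset ι} (hAC : Disjoint A C) (D : κ) (a r : ι → Y) :
    prodKernel F (A ∪ C) D (A.piecewise a r) = prodKernel F A D a * prodKernel F C D r := by
  simp only [prodKernel, prod_union hAC]
  congr 1
  · exact prod_congr rfl fun t ht => by rw [piecewise_eq_of_mem _ _ _ ht]
  · exact prod_congr rfl fun t ht => by
      rw [piecewise_eq_of_notMem _ _ _ (disjoint_right.1 hAC ht)]

theorem mixture_union_piecewise {A C : Finset ι} (hAC : Disjoint A C) (r : ι → Y) :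
    (fun a => mixture 𝒟 m F (A ∪ C) (A.piecewise a r))
      = ∑ D ∈ 𝒟, (m D * prodKernel F C D r) • prodKernel F A D := by
  ext a
  simp only [mixture, Finset.sum_apply, Pi.smul_apply, smul_eq_mul, prodKernel_union_piecewise hAC]
  exact sum_congr rfl fun D _ => by ring

-- `c D = m' D * φ (prodKernel F' A D)`, where `φ` is dual to the `A`-kernels of `𝒟` at `D₀`.
theorem exists_coeff_of_mixture_eq (hA : LinearIndepOn ℝ (prodKernel F A) (𝒟 : Set κ))
    (hD₀ : D₀ ∈ 𝒟) :
    ∃ c : κ → ℝ, ∀ C : Finset ι, Disjoint A C →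
      mixture 𝒟 m F (A ∪ C) = mixture 𝒟' m' F' (A ∪ C) →
      ∀ r, m D₀ * prodKernel F C D₀ r = ∑ D ∈ 𝒟', c D * prodKernel F' C D r := by
  obtain ⟨φ, hφ⟩ := hA.exists_dual_sum_smul_eq hD₀
  refine ⟨fun D => m' D * φ (prodKernel F' A D), fun C hAC h r => ?_⟩
  have hsplit : ∑ D ∈ 𝒟, (m D * prodKernel F C D r) • prodKernel F A D
      = ∑ D ∈ 𝒟', (m' D * prodKernel F' C D r) • prodKernel F' A D := by
    rw [← mixture_union_piecewise hAC, ← mixture_union_piecewise hAC, h]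
  rw [← hφ fun D => m D * prodKernel F C D r, hsplit, map_sum]
  exact sum_congr rfl fun D _ => by rw [map_smul, smul_eq_mul]; ring

theorem exists_eq_of_mixture_eq {τ : ι} (hAB : Disjoint A B) (hτA : τ ∉ A) (hτB : τ ∉ B)
    (hA : LinearIndepOn ℝ (prodKernel F A) (𝒟 : Set κ))
    (hB' : LinearIndepOn ℝ (prodKernel F' B) (𝒟' : Set κ))
    (hS : mixture 𝒟 m F (A ∪ B) = mixture 𝒟' m' F' (A ∪ B))
    (hSτ : mixture 𝒟 m F (A ∪ insert τ B) = mixture 𝒟' m' F' (A ∪ insert τ B))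
    (hD₀ : D₀ ∈ 𝒟) {r₀ : ι → Y} (hne : m D₀ * prodKernel F B D₀ r₀ ≠ 0) :
    ∃ D ∈ 𝒟', F' τ D = F τ D₀ := by
  obtain ⟨c, hc⟩ := exists_coeff_of_mixture_eq (m := m) (m' := m') (F' := F') hA hD₀
  have hB := hc B hAB hS
  have hτB' := hc (insert τ B) (disjoint_insert_right.2 ⟨hτA, hAB⟩) hSτ
  -- Subtract `F τ D₀ y` times the `B`-identity from the `insert τ B`-identity.
  have hrel : ∀ y, ∀ D ∈ 𝒟', c D * (F' τ D y - F τ D₀ y) = 0 := by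
    intro y
    refine linearIndepOn_finset_iff.1 hB' _ (funext fun r => ?_)
    have h := hτB' (update r τ y)
    simp only [prodKernel_insert hτB, update_self, prodKernel_update_of_notMem hτB] at h
    simp only [Finset.sum_apply, Pi.smul_apply, smul_eq_mul, Pi.zero_apply]
    calc ∑ D ∈ 𝒟', c D * (F' τ D y - F τ D₀ y) * prodKernel F' B D r
        = ∑ D ∈ 𝒟', c D * (F' τ D y * prodKernel F' B D r)
            - F τ D₀ y * ∑ D ∈ 𝒟', c D * prodKernel F' B D r := by
          rw [mul_sum, ← sum_sub_distrib]
          exact sum_congr rfl fun D _ => by ring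
      _ = 0 := by rw [← h, ← hB r]; ring
  obtain ⟨D, hD, hcD⟩ := exists_ne_zero_of_sum_ne_zero (hB r₀ ▸ hne)
  exact ⟨D, hD, funext fun y =>
    sub_eq_zero.1 ((mul_eq_zero.1 (hrel y D hD)).resolve_left (left_ne_zero_of_mul hcD))⟩

variable [Fintype Y]

theorem sum_mixture_update {t₀ : ι} (ht₀ : t₀ ∈ S) (hsum : ∀ D ∈ 𝒟, ∑ y, F t₀ D y = 1)
    (ys : ι → Y) : ∑ y, mixture 𝒟 m F S (update ys t₀ y) = mixture 𝒟 m F (S.erase t₀) ys := by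
  simp only [mixture, Finset.sum_apply, Pi.smul_apply, smul_eq_mul]
  rw [sum_comm]
  refine sum_congr rfl fun D hD => ?_
  simp only [prodKernel_update_of_mem ht₀]
  rw [← mul_sum, ← sum_mul, hsum D hD, one_mul]

theorem mixture_eq_of_subset {U : Finset ι} (hsum : ∀ t ∈ U, ∀ D ∈ 𝒟, ∑ y, F t D y = 1)
    (hsum' : ∀ t ∈ U, ∀ D ∈ 𝒟', ∑ y, F' t D y = 1)
    (h : mixture 𝒟 m F U = mixture 𝒟' m' F' U) (hS : S ⊆ U) :
    mixture 𝒟 m F S = mixture 𝒟' m' F' S := by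
  suffices ∀ E ⊆ U, mixture 𝒟 m F (U \ E) = mixture 𝒟' m' F' (U \ E) by
    simpa only [Finset.sdiff_sdiff_eq_self hS] using this (U \ S) sdiff_subset
  intro E
  induction E using Finset.induction_on with
  | empty => simpa using h
  | insert t E htE ih =>
    intro hE
    have ht : t ∈ U \ E := mem_sdiff.2 ⟨hE (mem_insert_self t E), htE⟩
    have hU : U \ insert t E = (U \ E).erase t := by rw [sdiff_insert]
    ext ys
    rw [hU, ← sum_mixture_update ht (hsum t (hE (mem_insert_self t E))),
      ← sum_mixture_update ht (hsum' t (hE (mem_insert_self t E))),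
      ih ((subset_insert t E).trans hE)]

end Mixture

theorem mem_and_eq_of_mixture_eq {Y : Type*} {T K τ : ℕ} (hτ : τ < T) (hK : 2 * K < T)
    {𝒟 𝒟' : Finset (Finset Y)} {m m' : Finset Y → ℝ} {F F' : ℕ → Finset Y → Y → ℝ}
    (hLI : ∀ 𝒯 ⊆ range T, #𝒯 = K → LinearIndepOn ℝ (prodKernel F 𝒯) (𝒟 : Set (Finset Y)))
    (hLI' : ∀ 𝒯 ⊆ range T, #𝒯 = K → LinearIndepOn ℝ (prodKernel F' 𝒯) (𝒟' : Set (Finset Y)))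
    (hmix : ∀ S ⊆ range T, mixture 𝒟 m F S = mixture 𝒟' m' F' S)
    (h𝒟ne : ∀ D ∈ 𝒟, D.Nonempty) (hm : ∀ D ∈ 𝒟, 0 < m D)
    (hFpos : ∀ t < T, ∀ D ∈ 𝒟, ∀ y ∈ D, 0 < F t D y)
    (hFzero : ∀ t < T, ∀ D ∈ 𝒟, ∀ y ∉ D, F t D y = 0)
    (hF'pos : ∀ t < T, ∀ D ∈ 𝒟', ∀ y ∈ D, 0 < F' t D y)
    (hF'zero : ∀ t < T, ∀ D ∈ 𝒟', ∀ y ∉ D, F' t D y = 0)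
    {D₀ : Finset Y} (hD₀ : D₀ ∈ 𝒟) : D₀ ∈ 𝒟' ∧ F' τ D₀ = F τ D₀ := by
  obtain ⟨A, hA, B, hB, hAB, hAK, hBK⟩ :=
    exists_disjoint_subsets_card_eq (s := (range T).erase τ) (a := K) (b := K)
      (by rw [card_erase_of_mem (mem_range.2 hτ), card_range]; omega)
  have hτA : τ ∉ A := fun h => notMem_erase τ _ (hA h)
  have hτB : τ ∉ B := fun h => notMem_erase τ _ (hB h)
  have hAT : A ⊆ range T := hA.trans (erase_subset τ _)
  have hBT : B ⊆ range T := hB.trans (erase_subset τ _)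
  obtain ⟨d, hd⟩ := h𝒟ne D₀ hD₀
  have hne : m D₀ * prodKernel F B D₀ (fun _ => d) ≠ 0 :=
    (mul_pos (hm D₀ hD₀) (prod_pos fun t ht => hFpos t (mem_range.1 (hBT ht)) D₀ hD₀ d hd)).ne'
  obtain ⟨D, hD, hFD⟩ := exists_eq_of_mixture_eq hAB hτA hτB (hLI A hAT hAK) (hLI' B hBT hBK)
    (hmix _ (union_subset hAT hBT))
    (hmix _ (union_subset hAT (insert_subset (mem_range.2 hτ) hBT))) hD₀ hne
  -- A choice set is recovered from its choice probabilities as their support.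
  obtain rfl : D = D₀ := by
    apply coe_injective
    rw [← support_eq_iff.2 ⟨fun y hy => (hF'pos τ hτ D hD y hy).ne', hF'zero τ hτ D hD⟩, hFD,
      support_eq_iff.2 ⟨fun y hy => (hFpos τ hτ D₀ hD₀ y hy).ne', hFzero τ hτ D₀ hD₀⟩]
  exact ⟨hD, hFD⟩

theorem unobserved_choice_sets_identification_general
    {Y : Type*} [Fintype Y]
    (T : ℕ) (hT : 3 ≤ T) (K : ℕ) (hK : K = (T - 1) / 2)
    (𝒟 𝒟' : Finset (Finset Y))
    (h𝒟ne : ∀ D ∈ 𝒟, D.Nonempty) (h𝒟'ne : ∀ D ∈ 𝒟', D.Nonempty)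
    (m m' : Finset Y → ℝ)
    (hm : ∀ D ∈ 𝒟, 0 < m D) (hm' : ∀ D ∈ 𝒟', 0 < m' D)
    (F F' : ℕ → Finset Y → Y → ℝ)
    (hFpos : ∀ t < T, ∀ D ∈ 𝒟, ∀ y ∈ D, 0 < F t D y)
    (hFzero : ∀ t < T, ∀ D ∈ 𝒟, ∀ y ∉ D, F t D y = 0)
    (hFsum : ∀ t < T, ∀ D ∈ 𝒟, ∑ y, F t D y = 1)
    (hF'pos : ∀ t < T, ∀ D ∈ 𝒟', ∀ y ∈ D, 0 < F' t D y)
    (hF'zero : ∀ t < T, ∀ D ∈ 𝒟', ∀ y ∉ D, F' t D y = 0)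
    (hF'sum : ∀ t < T, ∀ D ∈ 𝒟', ∑ y, F' t D y = 1)
    (hLI : ∀ 𝒯 ⊆ Finset.range T, 𝒯.card = K →
      ∀ α : Finset Y → ℝ,
        (∀ ys : ℕ → Y, ∑ D ∈ 𝒟, α D * ∏ t ∈ 𝒯, F t D (ys t) = 0) →
        ∀ D ∈ 𝒟, α D = 0)
    (hLI' : ∀ 𝒯 ⊆ Finset.range T, 𝒯.card = K →
      ∀ α : Finset Y → ℝ,
        (∀ ys : ℕ → Y, ∑ D ∈ 𝒟', α D * ∏ t ∈ 𝒯, F' t D (ys t) = 0) →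
        ∀ D ∈ 𝒟', α D = 0)
    (heq : ∀ ys : ℕ → Y,
      ∑ D ∈ 𝒟, m D * ∏ t ∈ Finset.range T, F t D (ys t)
        = ∑ D ∈ 𝒟', m' D * ∏ t ∈ Finset.range T, F' t D (ys t)) :
    𝒟' = 𝒟 ∧ (∀ D ∈ 𝒟, m' D = m D) ∧
      (∀ t < T, ∀ D ∈ 𝒟, ∀ y : Y, F' t D y = F t D y) := by
  have h2K : 2 * K < T := by omega
  replace hLI := fun 𝒯 h𝒯 h𝒯K => linearIndepOn_prodKernel_iff.2 (hLI 𝒯 h𝒯 h𝒯K)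
  replace hLI' := fun 𝒯 h𝒯 h𝒯K => linearIndepOn_prodKernel_iff.2 (hLI' 𝒯 h𝒯 h𝒯K)
  have hmix : ∀ S ⊆ range T, mixture 𝒟 m F S = mixture 𝒟' m' F' S := fun S =>
    mixture_eq_of_subset (fun t ht => hFsum t (mem_range.1 ht))
      (fun t ht => hF'sum t (mem_range.1 ht)) (funext fun ys => by simp only [mixture_apply, heq])
  have hfwd := fun τ (hτ : τ < T) D (hD : D ∈ 𝒟) => mem_and_eq_of_mixture_eq hτ h2K hLI hLI' hmix
    h𝒟ne hm hFpos hFzero hF'pos hF'zero hD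
  have hbwd := fun D (hD : D ∈ 𝒟') => (mem_and_eq_of_mixture_eq (by omega : 0 < T) h2K hLI' hLI
    (fun S hS => (hmix S hS).symm) h𝒟'ne hm' hF'pos hF'zero hFpos hFzero hD).1
  have h𝒟 : 𝒟' = 𝒟 := Subset.antisymm hbwd fun D hD => (hfwd 0 (by omega) D hD).1
  have hF : ∀ t ∈ range T, ∀ D ∈ 𝒟, F' t D = F t D := fun t ht D hD =>
    (hfwd t (mem_range.1 ht) D hD).2
  obtain ⟨A, hA, hAK⟩ := exists_subset_card_eq (s := range T) (n := K) (by rw [card_range]; omega)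
  have hmixA : mixture 𝒟 m' F A = mixture 𝒟 m F A := by
    rw [hmix A hA, h𝒟, mixture_congr fun t ht => hF t (hA ht)]
  exact ⟨h𝒟, linearIndepOn_finset_iffₛ.1 (hLI A hA hAK) m' m hmixA,
    fun t ht D hD => congrFun (hF t (mem_range.2 ht) D hD)⟩

/-- **Uniqueness of choice-set structures (Theorem 1).**
`𝒴` is a finite nonempty set of alternatives (type `Y`), time is indexed by
`t ∈ {0, …, T-1}` (0-based version of `{1, …, T}`).  Two choice-set structures
`(𝒟, m, F)` and `(𝒟', m', F')` on `Y` with horizon `T ≥ 3`, each satisfying the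
linear-independence condition for every time subset of size `K = ⌊(T-1)/2⌋`,
that induce the same joint distribution on `𝒴^T` must coincide. -/
theorem unobserved_choice_sets_identification
    {Y : Type*} [Fintype Y] [DecidableEq Y] [Nonempty Y]
    (T : ℕ) (hT : 3 ≤ T) (K : ℕ) (hK : K = (T - 1) / 2)
    (𝒟 𝒟' : Finset (Finset Y))
    (h𝒟 : 𝒟.Nonempty) (h𝒟' : 𝒟'.Nonempty)
    (h𝒟ne : ∀ D ∈ 𝒟, D.Nonempty) (h𝒟'ne : ∀ D ∈ 𝒟', D.Nonempty)
    (m m' : Finset Y → ℝ)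
    (hm : ∀ D ∈ 𝒟, 0 < m D) (hm' : ∀ D ∈ 𝒟', 0 < m' D)
    (hmsum : ∑ D ∈ 𝒟, m D = 1) (hm'sum : ∑ D ∈ 𝒟', m' D = 1)
    (F F' : ℕ → Finset Y → Y → ℝ)
    (hFpos : ∀ t < T, ∀ D ∈ 𝒟, ∀ y ∈ D, 0 < F t D y)
    (hFzero : ∀ t < T, ∀ D ∈ 𝒟, ∀ y ∉ D, F t D y = 0)
    (hFsum : ∀ t < T, ∀ D ∈ 𝒟, ∑ y, F t D y = 1)
    (hF'pos : ∀ t < T, ∀ D ∈ 𝒟', ∀ y ∈ D, 0 < F' t D y)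
    (hF'zero : ∀ t < T, ∀ D ∈ 𝒟', ∀ y ∉ D, F' t D y = 0)
    (hF'sum : ∀ t < T, ∀ D ∈ 𝒟', ∑ y, F' t D y = 1)
    (hLI : ∀ 𝒯 ⊆ Finset.range T, 𝒯.card = K →
      ∀ α : Finset Y → ℝ,
        (∀ ys : ℕ → Y, ∑ D ∈ 𝒟, α D * ∏ t ∈ 𝒯, F t D (ys t) = 0) →
        ∀ D ∈ 𝒟, α D = 0)
    (hLI' : ∀ 𝒯 ⊆ Finset.range T, 𝒯.card = K →
      ∀ α : Finset Y → ℝ,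
        (∀ ys : ℕ → Y, ∑ D ∈ 𝒟', α D * ∏ t ∈ 𝒯, F' t D (ys t) = 0) →
        ∀ D ∈ 𝒟', α D = 0)
    (heq : ∀ ys : ℕ → Y,
      ∑ D ∈ 𝒟, m D * ∏ t ∈ Finset.range T, F t D (ys t)
        = ∑ D ∈ 𝒟', m' D * ∏ t ∈ Finset.range T, F' t D (ys t)) :
    𝒟' = 𝒟 ∧ (∀ D ∈ 𝒟, m' D = m D) ∧
      (∀ t < T, ∀ D ∈ 𝒟, ∀ y : Y, F' t D y = F t D y) :=
  unobserved_choice_sets_identification_general T hT K hK 𝒟 𝒟' h𝒟ne h𝒟'ne m m' hm hm' F F' hFpos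
    hFzero hFsum hF'pos hF'zero hF'sum hLI hLI' heq
end

section
/- Let 𝒴 be a finite nonempty set with |𝒴| = Y and let K be an integer with K ≥ Y. For each t ∈ {1,…,K} and each nonempty subset D ⊆ 𝒴, let F_t(·|D) : 𝒴 → ℝ satisfy F_t(y|D) > 0 for every y ∈ D and F_t(y|D) = 0 for every y ∉ D. Then the family of functions 𝒴^K → ℝ given by (y_1,…,y_K) ↦ ∏_{t=1}^{K} F_t(y_t|D), indexed by the nonempty subsets D of 𝒴, is linearly independent in the real vector space of functions 𝒴^K → ℝ; in particular, for any collection of distinct nonempty subsets of 𝒴 the corresponding subfamily is linearly independent. -/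
/-!
Order the nonempty subsets by inclusion. For each `D`, a panel `y_1, …, y_K` that runs through
all of `D` (possible since `K ≥ |D|`) makes the product for `D` positive and the product for every
`D'` not containing `D` vanish. So the coefficient matrix is triangular with respect to inclusion,
and an inclusion-maximal `D` with `α D ≠ 0` gives a contradiction.
-/

open Finset

theorem Finset.eq_zero_of_sum_mul_eq_zero_of_triangular {ι S R : Type*} [PartialOrder ι]
    [Semiring R] [NoZeroDivisors R] (𝒟 : Finset ι) (f : ι → S → R)
    (htri : ∀ i ∈ 𝒟, ∃ x, f i x ≠ 0 ∧ ∀ j ∈ 𝒟, ¬ i ≤ j → f j x = 0)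
    (α : ι → R) (hα : ∀ x, ∑ i ∈ 𝒟, α i * f i x = 0) :
    ∀ i ∈ 𝒟, α i = 0 := by
  classical
  by_contra! h
  obtain ⟨i, hi⟩ := ({i ∈ 𝒟 | α i ≠ 0} : Finset ι).exists_maximal (by simpa [Finset.Nonempty])
  obtain ⟨hi𝒟, hαi⟩ := mem_filter.mp hi.prop
  obtain ⟨x, hfi, hoff⟩ := htri i hi𝒟
  have hsingle : ∀ j ∈ 𝒟, j ≠ i → α j * f j x = 0 := by
    intro j hj hji
    by_cases hαj : α j = 0
    · rw [hαj, zero_mul]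
    · have hnot : ¬ i ≤ j := fun hij ↦
        hji (le_antisymm (hi.2 (mem_filter.mpr ⟨hj, hαj⟩) hij) hij)
      rw [hoff j hj hnot, mul_zero]
  have hsum := hα x
  rw [sum_eq_single_of_mem i hi𝒟 hsingle] at hsum
  exact mul_ne_zero hαi hfi hsum

theorem Finset.exists_seq_mem_of_card_le {Y : Type*} {D : Finset Y} (hD : D.Nonempty)
    {K : ℕ} (hK : D.card ≤ K) :
    ∃ ys : ℕ → Y, (∀ t, ys t ∈ D) ∧ ∀ y ∈ D, ∃ t < K, ys t = y := by
  obtain ⟨d, hd⟩ := hD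
  refine ⟨fun t ↦ if h : t < D.card then D.equivFin.symm ⟨t, h⟩ else d, fun t ↦ ?_, fun y hy ↦ ?_⟩
  · dsimp only
    split_ifs
    exacts [Subtype.prop _, hd]
  · refine ⟨D.equivFin ⟨y, hy⟩, (D.equivFin ⟨y, hy⟩).isLt.trans_le hK, ?_⟩
    simp

theorem long_panel_linear_independence_general
    {Y : Type*} [Fintype Y]
    (K : ℕ) (hK : Fintype.card Y ≤ K)
    (F : ℕ → Finset Y → Y → ℝ)
    (hFpos : ∀ t < K, ∀ D : Finset Y, D.Nonempty → ∀ y ∈ D, 0 < F t D y)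
    (hFzero : ∀ t < K, ∀ D : Finset Y, D.Nonempty → ∀ y ∉ D, F t D y = 0)
    (𝒟 : Finset (Finset Y)) (h𝒟 : ∀ D ∈ 𝒟, D.Nonempty)
    (α : Finset Y → ℝ)
    (hα : ∀ ys : ℕ → Y, ∑ D ∈ 𝒟, α D * ∏ t ∈ Finset.range K, F t D (ys t) = 0) :
    ∀ D ∈ 𝒟, α D = 0 := by
  refine 𝒟.eq_zero_of_sum_mul_eq_zero_of_triangular _ (fun D hD ↦ ?_) α hα
  obtain ⟨ys, hmem, hcover⟩ := exists_seq_mem_of_card_le (h𝒟 D hD) ((card_le_univ D).trans hK)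
  refine ⟨ys, (prod_pos fun t ht ↦ hFpos t (mem_range.mp ht) D (h𝒟 D hD) _ (hmem t)).ne',
    fun D' hD' hsub ↦ ?_⟩
  obtain ⟨y, hyD, hyD'⟩ := not_subset.mp hsub
  obtain ⟨t, htK, rfl⟩ := hcover y hyD
  exact prod_eq_zero (mem_range.mpr htK) (hFzero t htK D' (h𝒟 D' hD') _ hyD')

/-- **Proposition 1 (sufficient condition for linear independence via long panels).**
If `K ≥ |𝒴|` and each `F_t(·|D)` has full support exactly on `D` (positive on `D`,
zero off `D`), then the family of product functions
`(y_1,…,y_K) ↦ ∏_{t<K} F_t(y_t|D)`, indexed by nonempty subsets `D` of `𝒴`,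
is linearly independent; in particular any subfamily indexed by a collection `𝒟`
of distinct nonempty subsets is linearly independent. -/
theorem long_panel_linear_independence
    {Y : Type*} [Fintype Y] [DecidableEq Y] [Nonempty Y]
    (K : ℕ) (hK : Fintype.card Y ≤ K)
    (F : ℕ → Finset Y → Y → ℝ)
    (hFpos : ∀ t < K, ∀ D : Finset Y, D.Nonempty → ∀ y ∈ D, 0 < F t D y)
    (hFzero : ∀ t < K, ∀ D : Finset Y, D.Nonempty → ∀ y ∉ D, F t D y = 0)
    (𝒟 : Finset (Finset Y)) (h𝒟 : ∀ D ∈ 𝒟, D.Nonempty)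
    (α : Finset Y → ℝ)
    (hα : ∀ ys : ℕ → Y, ∑ D ∈ 𝒟, α D * ∏ t ∈ Finset.range K, F t D (ys t) = 0) :
    ∀ D ∈ 𝒟, α D = 0 :=
  long_panel_linear_independence_general K hK F hFpos hFzero 𝒟 h𝒟 α hα
end

section
/- Let 𝒴 be a finite nonempty set and K ≥ 1 an integer. Let D_1, D_2, …, D_d be nonempty subsets of 𝒴 with the excluded-choice property: for every k ∈ {1,…,d} there exists y_k ∈ D_k such that y_k ∉ D_{k′} for every k′ ≠ k. For each t ∈ {1,…,K} and each k ∈ {1,…,d}, let F_t(·|D_k) : 𝒴 → ℝ satisfy F_t(y|D_k) > 0 for every y ∈ D_k and F_t(y|D_k) = 0 for every y ∉ D_k. Then the family of functions 𝒴^K → ℝ given by (y_1,…,y_K) ↦ ∏_{t=1}^{K} F_t(y_t|D_k), indexed by k ∈ {1,…,d}, is linearly independent in the real vector space of functions 𝒴^K → ℝ. -/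
theorem coeff_eq_zero_of_isolating_point {ι S R : Type*} [Fintype ι] [Semiring R]
    [NoZeroDivisors R] {g : ι → S → R} {α : ι → R} (hα : ∀ s, ∑ i, α i * g i s = 0)
    {i : ι} {s : S} (hi : g i s ≠ 0) (hother : ∀ j ≠ i, g j s = 0) : α i = 0 := by
  have h := hα s
  rw [Finset.sum_eq_single i (fun j _ hj => by rw [hother j hj, mul_zero])
    (fun h => absurd (Finset.mem_univ i) h)] at h
  exact (mul_eq_zero.mp h).resolve_right hi

theorem excluded_choices_linear_independence_general
    {Y : Type*}
    (K : ℕ) (hK : 1 ≤ K) (d : ℕ)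
    (D : Fin d → Finset Y)
    (hexc : ∀ k : Fin d, ∃ y ∈ D k, ∀ k' : Fin d, k' ≠ k → y ∉ D k')
    (F : ℕ → Fin d → Y → ℝ)
    (hFpos : ∀ t < K, ∀ k, ∀ y ∈ D k, 0 < F t k y)
    (hFzero : ∀ t < K, ∀ k, ∀ y ∉ D k, F t k y = 0)
    (α : Fin d → ℝ)
    (hα : ∀ ys : ℕ → Y, ∑ k, α k * ∏ t ∈ Finset.range K, F t k (ys t) = 0) :
    ∀ k, α k = 0 := by
  intro k
  obtain ⟨y, hyk, hy⟩ := hexc k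
  -- The profile choosing the excluded alternative `y` of `D k` in every period isolates `k`.
  refine coeff_eq_zero_of_isolating_point (s := fun _ => y) hα ?_ ?_
  · exact (Finset.prod_pos fun t ht => hFpos t (Finset.mem_range.mp ht) k y hyk).ne'
  · intro k' hk'
    exact Finset.prod_eq_zero (Finset.mem_range.mpr hK) (hFzero 0 hK k' y (hy k' hk'))

/-- **Proposition 2(ii) (excluded choices imply linear independence).**
Let `D 0, …, D (d-1)` be nonempty subsets of a finite nonempty set `𝒴` such that
every `D k` contains an alternative `y_k` belonging to no other `D k'`, and
suppose each `F_t(·|D_k)` is positive on `D_k` and zero off `D_k`.  Then the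
family of product functions `(y_1,…,y_K) ↦ ∏_{t<K} F_t(y_t|D_k)`, indexed by
`k`, is linearly independent. -/
theorem excluded_choices_linear_independence
    {Y : Type*} [Fintype Y] [DecidableEq Y] [Nonempty Y]
    (K : ℕ) (hK : 1 ≤ K) (d : ℕ)
    (D : Fin d → Finset Y)
    (hDne : ∀ k, (D k).Nonempty)
    (hexc : ∀ k : Fin d, ∃ y ∈ D k, ∀ k' : Fin d, k' ≠ k → y ∉ D k')
    (F : ℕ → Fin d → Y → ℝ)
    (hFpos : ∀ t < K, ∀ k, ∀ y ∈ D k, 0 < F t k y)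
    (hFzero : ∀ t < K, ∀ k, ∀ y ∉ D k, F t k y = 0)
    (α : Fin d → ℝ)
    (hα : ∀ ys : ℕ → Y, ∑ k, α k * ∏ t ∈ Finset.range K, F t k (ys t) = 0) :
    ∀ k, α k = 0 :=
  excluded_choices_linear_independence_general K hK d D hexc F hFpos hFzero α hα
end

section
/- Let (𝒟, m, (F_t)_{t=1}^{3}) be a choice-set structure on 𝒴 with horizon T = 3, and enumerate 𝒟 = {D_1,…,D_d}. Suppose z̃_1,…,z̃_d ∈ 𝒴 are distinct elements such that the d×d real matrices L̃_1 = [F_1(z̃_i|D_k)]_{i,k} and L̃_2 = [F_2(z̃_i|D_k)]_{i,k} are both invertible. Define the d×d matrices L̃_{1,2}[i,j] = Σ_{k=1}^{d} m(D_k) F_1(z̃_i|D_k) F_2(z̃_j|D_k) and, for each y ∈ 𝒴, L̃_{2,1,y}[i,j] = Σ_{k=1}^{d} m(D_k) F_2(z̃_i|D_k) F_1(z̃_j|D_k) F_3(y|D_k). Then L̃_{1,2} is invertible, and for every y ∈ 𝒴 one has the eigendecomposition L̃_{2,1,y} · (L̃_{1,2}ᵀ)^{−1} = L̃_2 · diag(F_3(y|D_1),…,F_3(y|D_d))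 · L̃_2^{−1}. -/
/-!
With `M = diag(m)`, both matrices factor through the same change of basis:
`L̃₁₂ = L̃₁ M L̃₂ᵀ`, hence `L̃₁₂ᵀ = L̃₂ M L̃₁ᵀ`, while `L̃₂₁ʸ = L̃₂ diag(F₃(y|·)) M L̃₁ᵀ`.
So `L̃₂₁ʸ = (L̃₂ diag(F₃(y|·)) L̃₂⁻¹) L̃₁₂ᵀ`, and `L̃₁₂ᵀ` is invertible since `L̃₁`, `L̃₂`
and `M` are.
-/

namespace Matrix

variable {m n k R : Type*} [Fintype k] [DecidableEq k] [CommRing R]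

theorem mul_diagonal_mul_transpose_apply (A : Matrix m k R) (B : Matrix n k R) (w : k → R)
    (i : m) (j : n) : (A * diagonal w * Bᵀ) i j = ∑ l, w l * A i l * B j l := by
  rw [mul_apply]
  simp only [mul_diagonal, transpose_apply]
  exact Finset.sum_congr rfl fun l _ => by ring

theorem transpose_mul_diagonal_mul_transpose (A : Matrix m k R) (B : Matrix n k R) (w : k → R) :
    (A * diagonal w * Bᵀ)ᵀ = B * diagonal w * Aᵀ := by
  rw [transpose_mul, transpose_mul, transpose_transpose, diagonal_transpose, Matrix.mul_assoc]

variable [Fintype n] [DecidableEq n]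

theorem isUnit_det_mul_diagonal_mul_transpose {A B : Matrix n n R} {w : n → R}
    (hA : IsUnit A.det) (hB : IsUnit B.det) (hw : ∀ l, IsUnit (w l)) :
    IsUnit (A * diagonal w * Bᵀ).det := by
  rw [det_mul, det_mul, det_transpose, det_diagonal]
  exact (hA.mul (IsUnit.prod_univ_iff.2 hw)).mul hB

theorem mul_diagonal_mul_transpose_mul_inv {A B : Matrix n n R} {w : n → R}
    (hA : IsUnit A.det) (hB : IsUnit B.det) (hw : ∀ l, IsUnit (w l)) (c : n → R) :
    A * diagonal (fun l => c l * w l) * Bᵀ * (A * diagonal w * Bᵀ)⁻¹ = A * diagonal c * A⁻¹ := by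
  have hfactor :
      A * diagonal (fun l => c l * w l) * Bᵀ = A * diagonal c * A⁻¹ * (A * diagonal w * Bᵀ) := by
    simp only [← diagonal_mul_diagonal, Matrix.mul_assoc, nonsing_inv_mul_cancel_left _ _ hA]
  rw [hfactor, mul_nonsing_inv_cancel_right _ _ (isUnit_det_mul_diagonal_mul_transpose hA hB hw)]

end Matrix

theorem eigendecomposition_of_choice_matrices_general
    {Y : Type*}
    (d : ℕ)
    (m : Fin d → ℝ) (hm : ∀ k, 0 < m k)
    (F : Fin 3 → Fin d → Y → ℝ)
    (z : Fin d → Y)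
    (L₁ L₂ L₁₂ : Matrix (Fin d) (Fin d) ℝ)
    (L₂₁ : Y → Matrix (Fin d) (Fin d) ℝ)
    (hL₁ : L₁ = Matrix.of fun i k => F 0 k (z i))
    (hL₂ : L₂ = Matrix.of fun i k => F 1 k (z i))
    (hL₁₂ : L₁₂ = Matrix.of fun i j => ∑ k, m k * F 0 k (z i) * F 1 k (z j))
    (hL₂₁ : ∀ y : Y,
      L₂₁ y = Matrix.of fun i j => ∑ k, m k * F 1 k (z i) * F 0 k (z j) * F 2 k y)
    (hL₁inv : IsUnit L₁.det) (hL₂inv : IsUnit L₂.det) :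
    IsUnit L₁₂.det ∧
      ∀ y : Y, L₂₁ y * (L₁₂.transpose)⁻¹
        = L₂ * Matrix.diagonal (fun k => F 2 k y) * L₂⁻¹ := by
  have hmunit : ∀ k, IsUnit (m k) := fun k => (hm k).ne'.isUnit
  have hL₁₂_eq : L₁₂ = L₁ * Matrix.diagonal m * L₂.transpose := by
    ext i j
    rw [Matrix.mul_diagonal_mul_transpose_apply, hL₁₂, hL₁, hL₂]
    rfl
  have hL₂₁_eq : ∀ y,
      L₂₁ y = L₂ * Matrix.diagonal (fun k => F 2 k y * m k) * L₁.transpose := fun y => by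
    ext i j
    rw [Matrix.mul_diagonal_mul_transpose_apply, hL₂₁, hL₁, hL₂]
    simp only [Matrix.of_apply]
    exact Finset.sum_congr rfl fun k _ => by ring
  refine ⟨hL₁₂_eq ▸ Matrix.isUnit_det_mul_diagonal_mul_transpose hL₁inv hL₂inv hmunit, fun y => ?_⟩
  rw [hL₂₁_eq, hL₁₂_eq, Matrix.transpose_mul_diagonal_mul_transpose,
    Matrix.mul_diagonal_mul_transpose_mul_inv hL₂inv hL₁inv hmunit]

/-- **Step 3 of the proof of Theorem 1 (eigendecomposition).**
For a choice-set structure with horizon `T = 3` (times `F 0, F 1, F 2`), choice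
sets `D 0, …, D (d-1)`, and distinct alternatives `z 0, …, z (d-1)` such that
`L̃₁ = [F₁(z_i|D_k)]` and `L̃₂ = [F₂(z_i|D_k)]` are invertible, the matrix
`L̃₁₂` is invertible and `L̃₂₁ʸ (L̃₁₂ᵀ)⁻¹ = L̃₂ diag(F₃(y|D_k)) L̃₂⁻¹` for all `y`. -/
theorem eigendecomposition_of_choice_matrices
    {Y : Type*} [Fintype Y] [DecidableEq Y] [Nonempty Y]
    (d : ℕ) (hd : 1 ≤ d)
    (D : Fin d → Finset Y)
    (hDne : ∀ k, (D k).Nonempty) (hDinj : Function.Injective D)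
    (m : Fin d → ℝ) (hm : ∀ k, 0 < m k) (hmsum : ∑ k, m k = 1)
    (F : Fin 3 → Fin d → Y → ℝ)
    (hFpos : ∀ t k, ∀ y ∈ D k, 0 < F t k y)
    (hFzero : ∀ t k, ∀ y ∉ D k, F t k y = 0)
    (hFsum : ∀ t k, ∑ y, F t k y = 1)
    (z : Fin d → Y) (hz : Function.Injective z)
    (L₁ L₂ L₁₂ : Matrix (Fin d) (Fin d) ℝ)
    (L₂₁ : Y → Matrix (Fin d) (Fin d) ℝ)
    (hL₁ : L₁ = Matrix.of fun i k => F 0 k (z i))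
    (hL₂ : L₂ = Matrix.of fun i k => F 1 k (z i))
    (hL₁₂ : L₁₂ = Matrix.of fun i j => ∑ k, m k * F 0 k (z i) * F 1 k (z j))
    (hL₂₁ : ∀ y : Y,
      L₂₁ y = Matrix.of fun i j => ∑ k, m k * F 1 k (z i) * F 0 k (z j) * F 2 k y)
    (hL₁inv : IsUnit L₁.det) (hL₂inv : IsUnit L₂.det) :
    IsUnit L₁₂.det ∧
      ∀ y : Y, L₂₁ y * (L₁₂.transpose)⁻¹
        = L₂ * Matrix.diagonal (fun k => F 2 k y) * L₂⁻¹ :=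
  eigendecomposition_of_choice_matrices_general d m hm F z L₁ L₂ L₁₂ L₂₁ hL₁ hL₂ hL₁₂ hL₂₁ hL₁inv
    hL₂inv
end
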